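/- For every integer k ≥ 1, the k-th probabilists' Hermite polynomial He_k has a real root x with x² ≥ k − 1; equivalently, the largest real root h_k of the k-th physicists' Hermite polynomial H_k satisfies h_k ≥ √((k−1)/2). -/

import Mathlib

open Polynomial Filter

namespace HermiteRoot

lemma derivative_hermite (n : ℕ) :
    derivative (hermite (n + 1)) = ((n : ℤ[X]) + 1) * hermite n := by
  induction n with
  | zero => simp [hermite_one, hermite_zero]
  | succ n ih =>
    rw [hermite_succ (n + 1), derivative_sub, derivative_mul, derivative_X, one_mul, ih,
      derivative_mul, hermite_succ n]
    have : derivative ((n : ℤ[X]) + 1) = 0 := by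
      simp [Polynomial.derivative_natCast]
    rw [this]
    push_cast
    ring

noncomputable def P (k : ℕ) : ℝ[X] := (hermite k).map (Int.castRingHom ℝ)

noncomputable def F (k : ℕ) (x : ℝ) : ℝ := eval x (P k)

lemma F_eq (k : ℕ) (x : ℝ) : (aeval x (hermite k) : ℝ) = F k x := by
  simp [F, P, aeval_def, eval_map]

lemma P_monic (k : ℕ) : (P k).Monic := (hermite_monic k).map _

lemma P_ne_zero (k : ℕ) : P k ≠ 0 := (P_monic k).ne_zero

lemma P_degree (k : ℕ) : (P k).degree = k := by
  rw [P, (hermite_monic k).degree_map, degree_hermite]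

lemma F_zero (x : ℝ) : F 0 x = 1 := by simp [F, P, hermite_zero]

lemma F_one (x : ℝ) : F 1 x = x := by simp [F, P, hermite_one]

lemma P_derivative (n : ℕ) : derivative (P (n + 1)) = ((n : ℝ[X]) + 1) * P n := by
  rw [P, derivative_map, derivative_hermite, Polynomial.map_mul]
  simp [P]

lemma P_succ (n : ℕ) : P (n + 1) = X * P n - derivative (P n) := by
  simp [P, hermite_succ, Polynomial.map_sub, Polynomial.map_mul, derivative_map]

lemma F_rec (n : ℕ) (x : ℝ) : F (n + 2) x = x * F (n + 1) x - ((n : ℝ) + 1) * F n x := by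
  have h := P_succ (n + 1)
  rw [P_derivative] at h
  simp [F, h]

lemma F_hasDerivAt (n : ℕ) (x : ℝ) :
    HasDerivAt (F (n + 1)) (((n : ℝ) + 1) * F n x) x := by
  have := (P (n + 1)).hasDerivAt x
  rwa [P_derivative, eval_mul, eval_add, eval_one, eval_natCast] at this

lemma F_continuous (k : ℕ) : Continuous (F k) := by
  exact (P k).continuous

lemma F_tendsto (k : ℕ) (hk : 1 ≤ k) : Tendsto (fun x => F k x) atTop atTop := by
  apply Polynomial.tendsto_atTop_of_leadingCoeff_nonneg
  · rw [P_degree]; exact_mod_cast Nat.pos_of_ne_zero (by omega)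
  · exact (P_monic k).leadingCoeff ▸ zero_le_one

/-- If `F k a ≤ 0` then `F k` has a root `≥ a`. -/
lemma exists_root_ge (k : ℕ) (hk : 1 ≤ k) {a : ℝ} (ha : F k a ≤ 0) :
    ∃ r, a ≤ r ∧ F k r = 0 := by
  obtain ⟨b, hb0, hba⟩ :=
    (((F_tendsto k hk).eventually_ge_atTop 0).and (eventually_ge_atTop a)).exists
  obtain ⟨r, hr, hr0⟩ := intermediate_value_Icc hba ((F_continuous k).continuousOn)
    ⟨ha, hb0⟩
  exact ⟨r, hr.1, hr0⟩

end HermiteRoot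

namespace HermiteRoot
open HermiteRoot

/-- Step: a root of `F (m+1)` that is `≥ x` yields a root of `F (m+2)` that is `≥ x`. -/
lemma step (m : ℕ) {x : ℝ} (h : ∃ r, x ≤ r ∧ F (m + 1) r = 0) :
    ∃ r, x ≤ r ∧ F (m + 2) r = 0 := by
  obtain ⟨r₀, hr₀x, hr₀⟩ := h
  set s : Finset ℝ := (P (m + 1)).roots.toFinset with hs
  have hr₀s : r₀ ∈ s := by
    rw [hs, Multiset.mem_toFinset, mem_roots (P_ne_zero (m + 1))]
    exact hr₀
  have hsne : s.Nonempty := ⟨r₀, hr₀s⟩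
  set r := s.max' hsne with hrdef
  have hrs : r ∈ s := s.max'_mem hsne
  have hr_root : F (m + 1) r = 0 := by
    have := Multiset.mem_toFinset.mp hrs
    exact ((mem_roots (P_ne_zero (m + 1))).mp this)
  have hrx : x ≤ r := le_trans hr₀x (s.le_max' r₀ hr₀s)
  -- no roots beyond r
  have hnoroot : ∀ y, r < y → F (m + 1) y ≠ 0 := by
    intro y hy hy0
    have : y ∈ s := by
      rw [hs, Multiset.mem_toFinset, mem_roots (P_ne_zero (m + 1))]
      exact hy0
    exact absurd (s.le_max' y this) (not_le.mpr hy)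
  -- F (m+1) is positive beyond r
  have hpos : ∀ y, r < y → 0 < F (m + 1) y := by
    intro y hy
    rcases lt_trichotomy (F (m + 1) y) 0 with hneg | hzero | hposy
    · obtain ⟨r', hr'y, hr'0⟩ := exists_root_ge (m + 1) (by omega) hneg.le
      exact absurd hr'0 (hnoroot r' (lt_of_lt_of_le hy hr'y))
    · exact absurd hzero (hnoroot y hy)
    · exact hposy
  -- derivative at r is nonnegative, hence F m r ≥ 0
  have hFm : 0 ≤ F m r := by
    have hd := F_hasDerivAt m r
    have hT : Tendsto (slope (F (m + 1)) r) (nhdsWithin r (Set.Ioi r))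
        (nhds (((m : ℝ) + 1) * F m r)) :=
      (hasDerivAt_iff_tendsto_slope.mp hd).mono_left
        (nhdsWithin_mono r (fun y hy => hy.ne'))
    have hev : ∀ᶠ y in nhdsWithin r (Set.Ioi r), 0 ≤ slope (F (m + 1)) r y := by
      filter_upwards [self_mem_nhdsWithin] with y hy
      have : (0:ℝ) < y - r := sub_pos.mpr hy
      rw [slope_def_field]
      rw [div_nonneg_iff]
      left
      constructor
      · rw [hr_root, sub_zero]; exact (hpos y hy).le
      · exact this.le
    have h0 : (0:ℝ) ≤ ((m : ℝ) + 1) * F m r := ge_of_tendsto hT hev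
    nlinarith [h0]
  -- F (m+2) r ≤ 0
  have hFm2 : F (m + 2) r ≤ 0 := by
    rw [F_rec, hr_root]
    nlinarith [hFm]
  obtain ⟨r', hr', hr'0⟩ := exists_root_ge (m + 2) (by omega) hFm2
  exact ⟨r', le_trans hrx hr', hr'0⟩

lemma chain (d j : ℕ) (hj : 1 ≤ j) {x : ℝ} (h : ∃ r, x ≤ r ∧ F j r = 0) :
    ∃ r, x ≤ r ∧ F (j + d) r = 0 := by
  induction d with
  | zero => exact h
  | succ d ih =>
    obtain ⟨m, hm⟩ : ∃ m, j + d = m + 1 := ⟨j + d - 1, by omega⟩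
    have : j + (d + 1) = m + 2 := by omega
    rw [this]
    exact step m (hm ▸ ih)

end HermiteRoot

namespace HermiteRoot

/-- At `x₀ = √(m+1)` some Hermite polynomial `F j`, `1 ≤ j ≤ m+2`, is nonpositive. -/
lemma init (m : ℕ) :
    ∃ j, 1 ≤ j ∧ j ≤ m + 2 ∧ F j (Real.sqrt (m + 1)) ≤ 0 := by
  by_contra hcon
  push_neg at hcon
  set x₀ : ℝ := Real.sqrt (m + 1) with hx₀
  have hx₀pos : 0 < x₀ := Real.sqrt_pos.mpr (by positivity)
  have hx₀sq : x₀ ^ 2 = (m : ℝ) + 1 := Real.sq_sqrt (by positivity)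
  have hnn : ∀ j, j ≤ m + 2 → 0 ≤ F j x₀ := by
    intro j hj
    cases j with
    | zero => rw [F_zero]; norm_num
    | succ i => exact (hcon (i + 1) (by omega) hj).le
  -- B : F (m+1) x₀ ≤ x₀ * F m x₀
  have hB : F (m + 1) x₀ ≤ x₀ * F m x₀ := by
    cases m with
    | zero => rw [F_one, F_zero]; ring_nf; exact le_refl _
    | succ l =>
      rw [F_rec]
      have := hnn l (by omega)
      nlinarith
  have hrec := F_rec m x₀
  have hkpos := hcon (m + 2) (by omega) (le_refl _)
  nlinarith [hnn (m + 1) (by omega), hnn m (by omega)]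

end HermiteRoot

/-- The `k`-th (probabilists') Hermite polynomial (`k ≥ 1`) has a real root `x` with
`x² ≥ k - 1`; equivalently, the largest root `h_k` of the `k`-th physicists' Hermite
polynomial satisfies `h_k ≥ √((k-1)/2)`. -/
theorem hermite_has_large_root (k : ℕ) (hk : 1 ≤ k) :
    ∃ x : ℝ, Polynomial.aeval x (Polynomial.hermite k) = 0 ∧ (k : ℝ) - 1 ≤ x ^ 2 := by
  open HermiteRoot in
  rcases Nat.lt_or_ge k 2 with hk2 | hk2
  · -- k = 1
    have : k = 1 := by omega
    subst this
    refine ⟨0, ?_, by norm_num⟩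
    rw [F_eq, F_one]
  · obtain ⟨m, rfl⟩ : ∃ m, k = m + 2 := ⟨k - 2, by omega⟩
    set x₀ : ℝ := Real.sqrt (m + 1) with hx₀
    have hx₀nn : 0 ≤ x₀ := Real.sqrt_nonneg _
    have hx₀sq : x₀ ^ 2 = (m : ℝ) + 1 := Real.sq_sqrt (by positivity)
    obtain ⟨j, hj1, hjk, hjle⟩ := init m
    obtain ⟨r, hrx, hr0⟩ := exists_root_ge j hj1 hjle
    obtain ⟨r', hr'x, hr'0⟩ := chain (m + 2 - j) j hj1 ⟨r, hrx, hr0⟩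
    rw [show j + (m + 2 - j) = m + 2 by omega] at hr'0
    refine ⟨r', by rw [F_eq]; exact hr'0, ?_⟩
    have : x₀ ^ 2 ≤ r' ^ 2 := by nlinarith
    push_cast
    nlinarith
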